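/- arXiv:1505.01644 — 2 statements merged into one kernel-verified Lean document; each statement's English description precedes it below -/
import Mathlib

section
/- Let λ₁, λ₂, λ₃, λ₄ and v₁, v₂, v₃, v₄ be real numbers satisfying the system (λ₁−λ₂)v₁v₂ + (λ₃−λ₄)v₃v₄ = 0, (λ₁−λ₃)v₁v₃ + (λ₄−λ₂)v₄v₂ = 0, (λ₁−λ₄)v₁v₄ + (λ₂−λ₃)v₂v₃ = 0. If all vⱼ are nonzero, then λ₁ = λ₂ = λ₃ = λ₄. -/
/-!
Writing `a = λ₁ - λ₂`, `b = λ₂ - λ₃`, `c = λ₃ - λ₄`, the three equations form a homogeneous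
linear system in `(a, b, c)` whose determinant is `v₁v₂v₃v₄ (v₁² + v₂² + v₃² + v₄²)`.
This is nonzero when all `vⱼ` are, so `a = b = c = 0`.
-/

section CPESystem

open Matrix

variable {R : Type*} [CommRing R] (v1 v2 v3 v4 : R)

/-- The coefficient matrix of the equations `δW⁺ = 0` in the unknowns
`(λ₁ - λ₂, λ₂ - λ₃, λ₃ - λ₄)`. -/
def cpeMatrix : Matrix (Fin 3) (Fin 3) R :=
  !![v1 * v2, 0, v3 * v4;
     v1 * v3, v1 * v3 - v2 * v4, -(v2 * v4);
     v1 * v4, v1 * v4 + v2 * v3, v1 * v4]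

theorem det_cpeMatrix :
    (cpeMatrix v1 v2 v3 v4).det = v1 * v2 * v3 * v4 * (v1 ^ 2 + v2 ^ 2 + v3 ^ 2 + v4 ^ 2) := by
  rw [det_fin_three]
  simp [cpeMatrix]
  ring

theorem cpeMatrix_mulVec_eq_zero {l1 l2 l3 l4 : R}
    (h1 : (l1 - l2) * v1 * v2 + (l3 - l4) * v3 * v4 = 0)
    (h2 : (l1 - l3) * v1 * v3 + (l4 - l2) * v4 * v2 = 0)
    (h3 : (l1 - l4) * v1 * v4 + (l2 - l3) * v2 * v3 = 0) :
    cpeMatrix v1 v2 v3 v4 *ᵥ ![l1 - l2, l2 - l3, l3 - l4] = 0 := by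
  ext i
  fin_cases i <;> simp [cpeMatrix, mulVec, dotProduct, Fin.sum_univ_three]
  · linear_combination h1
  · linear_combination h2
  · linear_combination h3

end CPESystem

theorem det_cpeMatrix_ne_zero {K : Type*} [Field K] [LinearOrder K] [IsStrictOrderedRing K]
    {v1 v2 v3 v4 : K} (hv1 : v1 ≠ 0) (hv2 : v2 ≠ 0) (hv3 : v3 ≠ 0) (hv4 : v4 ≠ 0) :
    (cpeMatrix v1 v2 v3 v4).det ≠ 0 := by
  rw [det_cpeMatrix]
  have hsum : 0 < v1 ^ 2 + v2 ^ 2 + v3 ^ 2 + v4 ^ 2 := by positivity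
  exact mul_ne_zero (by simp [*]) hsum.ne'

/-- if the three CPE equations hold and all `vⱼ` are nonzero,
then `λ₁ = λ₂ = λ₃ = λ₄`. -/
theorem eigenvalues_all_equal (l1 l2 l3 l4 v1 v2 v3 v4 : ℝ)
    (h1 : (l1 - l2) * v1 * v2 + (l3 - l4) * v3 * v4 = 0)
    (h2 : (l1 - l3) * v1 * v3 + (l4 - l2) * v4 * v2 = 0)
    (h3 : (l1 - l4) * v1 * v4 + (l2 - l3) * v2 * v3 = 0)
    (hv1 : v1 ≠ 0) (hv2 : v2 ≠ 0) (hv3 : v3 ≠ 0) (hv4 : v4 ≠ 0) :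
    l1 = l2 ∧ l2 = l3 ∧ l3 = l4 := by
  have hzero : ![l1 - l2, l2 - l3, l3 - l4] = 0 :=
    Matrix.eq_zero_of_mulVec_eq_zero (det_cpeMatrix_ne_zero hv1 hv2 hv3 hv4)
      (cpeMatrix_mulVec_eq_zero v1 v2 v3 v4 h1 h2 h3)
  have h12 := congrFun hzero 0
  have h23 := congrFun hzero 1
  have h34 := congrFun hzero 2
  simp only [Matrix.cons_val, Pi.zero_apply, sub_eq_zero] at h12 h23 h34
  exact ⟨h12, h23, h34⟩
end

section
/- Let (M⁴, g, f) be a 4-dimensional CPE metric with constant scalar curvature and δW⁺ = 0. Then in an orthonormal frame, 4(1+f)·δW⁺_{jkl} = W_{kljs}∇^s f + W_{k̄ l̄ j s}∇^s f + T_{lkj} + T_{l̄ k̄ j}, and consequently W_{kljs}∇^s f + W_{k̄ l̄ j s}∇^s f = −(T_{klj} + T_{k̄ l̄ j}) at points where 1+f ≠ 0 ... and contracting with ∇^j f yields (T_{ijk} + T_{ī j̄ k})∇^k f = 0. -/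
/-!
With constant scalar curvature, `δW⁺_jkl` is, up to the factor 4, the Cotton tensor `C_klj` plus
its dual `C_k̄l̄j` (the symmetry of `∇R_ic` in its last two slots turns the divergence formula into
Cotton tensors), and the CPE identity rewrites each Cotton term as `W(·, ·, j, ∇f) + T`.
Setting `δW⁺ = 0` and contracting with `∇^j f` kills the Weyl terms, since `W` is antisymmetric
in its last pair of slots while `∇f ⊗ ∇f` is symmetric.
-/

/-- `(k', l')` is the dual index pair of `(k, l)`: `(k, l, k', l')` is an even permutation
of `(0, 1, 2, 3)` (0-based indices; dual pairs `(0,1)↔(2,3)`, `(0,2)↔(3,1)`,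
`(0,3)↔(1,2)`). -/
def IsDualPair (k l k' l' : Fin 4) : Prop :=
  (k, l, k', l') ∈ ({(0, 1, 2, 3), (1, 0, 3, 2), (2, 3, 0, 1), (3, 2, 1, 0),
    (0, 2, 3, 1), (2, 0, 1, 3), (3, 1, 0, 2), (1, 3, 2, 0),
    (0, 3, 1, 2), (3, 0, 2, 1), (1, 2, 0, 3), (2, 1, 3, 0)} :
    Set (Fin 4 × Fin 4 × Fin 4 × Fin 4))

open Finset

theorem sum_sum_mul_mul_eq_zero_of_antisymm {ι R : Type*} [Fintype ι] [CommRing R]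
    [IsAddTorsionFree R] (A : ι → ι → R) (hA : ∀ j s, A j s = -A s j) (v : ι → R) :
    ∑ j, (∑ s, A j s * v s) * v j = 0 := by
  rw [← self_eq_neg]
  calc ∑ j, (∑ s, A j s * v s) * v j
      = ∑ j, ∑ s, A j s * v s * v j := by simp only [sum_mul]
    _ = ∑ s, ∑ j, A j s * v s * v j := sum_comm
    _ = -∑ s, (∑ j, A s j * v j) * v s := by
        simp only [sum_mul, ← sum_neg_distrib]
        refine sum_congr rfl fun s _ => sum_congr rfl fun j _ => ?_
        rw [hA j s]
        ring

section CPE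

variable {ι : Type*} {W : ι → ι → ι → ι → ℝ} {T C DRic : ι → ι → ι → ℝ}
  {f : ℝ} {v : ι → ℝ}

theorem four_mul_deltaW_eq_cotton_add_cotton {δ : ℝ} {j k l k' l' : ι}
    (hDRicSymm : ∀ a b c, DRic a b c = DRic a c b)
    (hCdef : ∀ k l j, C k l j = DRic k l j - DRic l k j)
    (hδ : 4 * δ = (DRic k j l - DRic l j k) + (DRic k' j l' - DRic l' j k')) :
    4 * δ = C k l j + C k' l' j := by
  rwa [hCdef, hCdef, ← hDRicSymm k, ← hDRicSymm l, ← hDRicSymm k', ← hDRicSymm l']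

variable [Fintype ι]

theorem four_mul_one_add_mul_deltaW_eq {δ : ℝ} {j k l k' l' : ι}
    (hDRicSymm : ∀ a b c, DRic a b c = DRic a c b)
    (hCdef : ∀ k l j, C k l j = DRic k l j - DRic l k j)
    (hCPE : ∀ i j k, (f + 1) * C i j k = (∑ s, W i j k s * v s) + T i j k)
    (hδ : 4 * δ = (DRic k j l - DRic l j k) + (DRic k' j l' - DRic l' j k')) :
    4 * (1 + f) * δ =
      (∑ s, W k l j s * v s) + (∑ s, W k' l' j s * v s) + T k l j + T k' l' j := by
  have hC := four_mul_deltaW_eq_cotton_add_cotton hDRicSymm hCdef hδ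
  linear_combination (1 + f) * hC + hCPE k l j + hCPE k' l' j

theorem sum_T_add_T_mul_eq_zero {i j i' j' : ι}
    (hWanti : ∀ k l j s, W k l j s = -W k l s j)
    (hWT : ∀ k, (∑ s, W i j k s * v s) + (∑ s, W i' j' k s * v s) = -(T i j k + T i' j' k)) :
    ∑ k, (T i j k + T i' j' k) * v k = 0 := by
  calc ∑ k, (T i j k + T i' j' k) * v k
      = -(∑ k, (∑ s, W i j k s * v s) * v k + ∑ k, (∑ s, W i' j' k s * v s) * v k) := by
        rw [← sum_add_distrib, ← sum_neg_distrib]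
        refine sum_congr rfl fun k _ => ?_
        linear_combination v k * hWT k
    _ = 0 := by
        rw [sum_sum_mul_mul_eq_zero_of_antisymm _ (hWanti i j),
          sum_sum_mul_mul_eq_zero_of_antisymm _ (hWanti i' j'), add_zero, neg_zero]

end CPE

/-- components at a point, orthonormal frame, 0-based indices: for a
4-dimensional CPE metric (CPE identity `(f+1)C_ijk = W_ijks∇^sf + T_ijk`, constant scalar
curvature so that `4δW⁺_jkl = (∇_kR_jl - ∇_lR_jk) + (∇_k̄R_jl̄ - ∇_l̄R_jk̄)`) with
`δW⁺ = 0`, one has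
`4(1+f)δW⁺_jkl = W_kljs∇^sf + W_k̄l̄js∇^sf + T_klj + T_k̄l̄j`, consequently
`W_kljs∇^sf + W_k̄l̄js∇^sf = -(T_klj + T_k̄l̄j)`, and contracting with `∇^jf` yields
`(T_ijk + T_īj̄k)∇^kf = 0` (using the antisymmetry of `W` in its last pair of slots). -/
theorem cpe_deltaWplus_contraction (f : ℝ) (v : Fin 4 → ℝ)
    (W : Fin 4 → Fin 4 → Fin 4 → Fin 4 → ℝ)
    (T C δW DRic : Fin 4 → Fin 4 → Fin 4 → ℝ)
    (hDRicSymm : ∀ a b c, DRic a b c = DRic a c b)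
    (hCdef : ∀ k l j, C k l j = DRic k l j - DRic l k j)
    (hδ : ∀ j k l k' l', IsDualPair k l k' l' →
      4 * δW j k l = (DRic k j l - DRic l j k) + (DRic k' j l' - DRic l' j k'))
    (hCPE : ∀ i j k, (f + 1) * C i j k = (∑ s, W i j k s * v s) + T i j k)
    (hWanti : ∀ k l j s, W k l j s = -W k l s j)
    (hharm : ∀ j k l, δW j k l = 0) :
    (∀ j k l k' l', IsDualPair k l k' l' →
      4 * (1 + f) * δW j k l =
        (∑ s, W k l j s * v s) + (∑ s, W k' l' j s * v s) + T k l j + T k' l' j) ∧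
    (∀ j k l k' l', IsDualPair k l k' l' →
      (∑ s, W k l j s * v s) + (∑ s, W k' l' j s * v s) = -(T k l j + T k' l' j)) ∧
    (∀ i j i' j', IsDualPair i j i' j' → ∑ k, (T i j k + T i' j' k) * v k = 0) := by
  have hformula : ∀ j k l k' l', IsDualPair k l k' l' →
      4 * (1 + f) * δW j k l =
        (∑ s, W k l j s * v s) + (∑ s, W k' l' j s * v s) + T k l j + T k' l' j :=
    fun j k l k' l' hp => four_mul_one_add_mul_deltaW_eq hDRicSymm hCdef hCPE (hδ j k l k' l' hp)
  have hWT : ∀ j k l k' l', IsDualPair k l k' l' →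
      (∑ s, W k l j s * v s) + (∑ s, W k' l' j s * v s) = -(T k l j + T k' l' j) := by
    intro j k l k' l' hp
    linear_combination -(hformula j k l k' l' hp) + 4 * (1 + f) * hharm j k l
  exact ⟨hformula, hWT, fun i j i' j' hp =>
    sum_T_add_T_mul_eq_zero hWanti fun k => hWT k i j i' j' hp⟩
end
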